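/- arXiv:nlin/0603062 — 3 statements merged into one kernel-verified Lean document; each statement's English description precedes it below -/
import Mathlib

section
/- If a phase S(x,y) satisfies the eikonal equation S_x² + S_y² = 4u with u = u(I₀) an invertible intensity law, and additionally satisfies the intensity conservation law I₀(S_xx + S_yy) + I₀' (u_x S_x + u_y S_y) = 0, then S satisfies the second-order quasilinear equation A S_xx + B S_yy + 2C S_xy = 0, where J₀ = log I₀ (as a function of u composed with u = (S_x² + S_y²)/4), A = J₀' S_x² + 2, B = J₀' S_y² + 2, C = J₀' S_x S_y. -/
/-- Partial derivative in the first variable. -/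
noncomputable def pdx (f : ℝ × ℝ → ℝ) (p : ℝ × ℝ) : ℝ := deriv (fun t => f (t, p.2)) p.1

/-- Partial derivative in the second variable. -/
noncomputable def pdy (f : ℝ × ℝ → ℝ) (p : ℝ × ℝ) : ℝ := deriv (fun t => f (p.1, t)) p.2

lemma hasDerivAt_line_x (g : ℝ × ℝ → ℝ) (g' : ℝ × ℝ →L[ℝ] ℝ) (x y : ℝ)
    (h : HasFDerivAt g g' (x, y)) :
    HasDerivAt (fun t => g (t, y)) (g' (1, 0)) x := by
  have h1 : HasDerivAt (fun t : ℝ => (t, y)) ((1 : ℝ), (0 : ℝ)) x :=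
    HasDerivAt.prodMk (hasDerivAt_id x) (hasDerivAt_const _ _)
  exact h.comp_hasDerivAt x h1

lemma hasDerivAt_line_y (g : ℝ × ℝ → ℝ) (g' : ℝ × ℝ →L[ℝ] ℝ) (x y : ℝ)
    (h : HasFDerivAt g g' (x, y)) :
    HasDerivAt (fun t => g (x, t)) (g' (0, 1)) y := by
  have h1 : HasDerivAt (fun t : ℝ => (x, t)) ((0 : ℝ), (1 : ℝ)) y :=
    HasDerivAt.prodMk (hasDerivAt_const _ _) (hasDerivAt_id y)
  exact h.comp_hasDerivAt y h1

lemma pdx_eq (f : ℝ × ℝ → ℝ) (p : ℝ × ℝ) (hf : DifferentiableAt ℝ f p) :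
    pdx f p = fderiv ℝ f p (1, 0) := by
  have := hasDerivAt_line_x f (fderiv ℝ f p) p.1 p.2 (by simpa using hf.hasFDerivAt)
  exact this.deriv

lemma pdy_eq (f : ℝ × ℝ → ℝ) (p : ℝ × ℝ) (hf : DifferentiableAt ℝ f p) :
    pdy f p = fderiv ℝ f p (0, 1) := by
  have := hasDerivAt_line_y f (fderiv ℝ f p) p.1 p.2 (by simpa using hf.hasFDerivAt)
  exact this.deriv

/-- If S satisfies the eikonal equation S_x² + S_y² = 4u with an invertible intensity
law I₀ = I₀(u) > 0, and the intensity conservation law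
I₀(S_xx + S_yy) + I₀'(u_x S_x + u_y S_y) = 0, then S satisfies the quasilinear
equation A S_xx + B S_yy + 2C S_xy = 0 with J₀ = log I₀,
A = J₀' S_x² + 2, B = J₀' S_y² + 2, C = J₀' S_x S_y. -/
theorem eikonal_conservation_implies_quasilinear
    (S : ℝ × ℝ → ℝ) (hS : ContDiff ℝ 2 S)
    (I₀ : ℝ → ℝ) (hI₀ : ContDiff ℝ (⊤ : ℕ∞) I₀) (hI₀pos : ∀ v, 0 < I₀ v)
    (hI₀inj : Function.Injective I₀)
    (u : ℝ × ℝ → ℝ) (hu : ContDiff ℝ 1 u)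
    (heik : ∀ p, (pdx S p) ^ 2 + (pdy S p) ^ 2 = 4 * u p)
    (hcons : ∀ p, I₀ (u p) * (pdx (pdx S) p + pdy (pdy S) p)
      + deriv I₀ (u p) * (pdx u p * pdx S p + pdy u p * pdy S p) = 0) :
    ∀ p, (deriv (fun v => Real.log (I₀ v)) (u p) * (pdx S p) ^ 2 + 2) * pdx (pdx S) p
      + (deriv (fun v => Real.log (I₀ v)) (u p) * (pdy S p) ^ 2 + 2) * pdy (pdy S) p
      + 2 * (deriv (fun v => Real.log (I₀ v)) (u p) * pdx S p * pdy S p) * pdy (pdx S) p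
        = 0 := by
  intro p
  have hSd : Differentiable ℝ S := hS.differentiable (by norm_num)
  have hS1 : ContDiff ℝ 1 (fderiv ℝ S) := hS.fderiv_right (by norm_num)
  have hS1d : Differentiable ℝ (fderiv ℝ S) := hS1.differentiable one_ne_zero
  -- second derivative at arbitrary point
  set D : ℝ × ℝ → (ℝ × ℝ) →L[ℝ] (ℝ × ℝ) →L[ℝ] ℝ := fderiv ℝ (fderiv ℝ S) with hD
  have hDq : ∀ q : ℝ × ℝ, HasFDerivAt (fderiv ℝ S) (D q) q := fun q => (hS1d q).hasFDerivAt
  have hsymm : ∀ q v w, D q v w = D q w v := fun q v w =>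
    second_derivative_symmetric (fun y => (hSd y).hasFDerivAt) (hDq q) v w
  -- pdx S, pdy S as fderiv applications, as functions
  have hpdxS : ∀ q, pdx S q = fderiv ℝ S q (1, 0) := fun q => pdx_eq S q (hSd q)
  have hpdyS : ∀ q, pdy S q = fderiv ℝ S q (0, 1) := fun q => pdy_eq S q (hSd q)
  -- derivative of q ↦ fderiv ℝ S q v
  have happ : ∀ (q : ℝ × ℝ) (v : ℝ × ℝ), HasFDerivAt (fun r => fderiv ℝ S r v)
      ((ContinuousLinearMap.apply ℝ ℝ v).comp (D q)) q := fun q v =>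
    ((ContinuousLinearMap.apply ℝ ℝ v).hasFDerivAt).comp q (hDq q)
  -- second partials
  have hxx : pdx (pdx S) p = D p (1, 0) (1, 0) := by
    have h1 : (fun t => pdx S (t, p.2)) = fun t => fderiv ℝ S (t, p.2) (1, 0) := by
      funext t; exact hpdxS (t, p.2)
    have h2 := hasDerivAt_line_x (fun r => fderiv ℝ S r (1, 0)) _ p.1 p.2
      (by simpa using happ p (1, 0))
    show deriv (fun t => pdx S (t, p.2)) p.1 = _
    rw [h1]
    simpa using h2.deriv
  have hyy : pdy (pdy S) p = D p (0, 1) (0, 1) := by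
    have h1 : (fun t => pdy S (p.1, t)) = fun t => fderiv ℝ S (p.1, t) (0, 1) := by
      funext t; exact hpdyS (p.1, t)
    have h2 := hasDerivAt_line_y (fun r => fderiv ℝ S r (0, 1)) _ p.1 p.2
      (by simpa using happ p (0, 1))
    show deriv (fun t => pdy S (p.1, t)) p.2 = _
    rw [h1]
    simpa using h2.deriv
  have hxy : pdy (pdx S) p = D p (0, 1) (1, 0) := by
    have h1 : (fun t => pdx S (p.1, t)) = fun t => fderiv ℝ S (p.1, t) (1, 0) := by
      funext t; exact hpdxS (p.1, t)
    have h2 := hasDerivAt_line_y (fun r => fderiv ℝ S r (1, 0)) _ p.1 p.2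
      (by simpa using happ p (1, 0))
    show deriv (fun t => pdx S (p.1, t)) p.2 = _
    rw [h1]
    simpa using h2.deriv
  -- partials of u via the eikonal equation
  have hueq : ∀ q : ℝ × ℝ, u q = ((fderiv ℝ S q (1, 0)) ^ 2 + (fderiv ℝ S q (0, 1)) ^ 2) / 4 := by
    intro q
    have := heik q
    rw [hpdxS q, hpdyS q] at this
    linarith
  have hux : pdx u p = (2 * fderiv ℝ S p (1, 0) * D p (1, 0) (1, 0)
      + 2 * fderiv ℝ S p (0, 1) * D p (1, 0) (0, 1)) / 4 := by
    have h1 : (fun t => u (t, p.2)) =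
        fun t => ((fderiv ℝ S (t, p.2) (1, 0)) ^ 2 + (fderiv ℝ S (t, p.2) (0, 1)) ^ 2) / 4 := by
      funext t; exact hueq (t, p.2)
    have ha := hasDerivAt_line_x (fun r => fderiv ℝ S r (1, 0)) _ p.1 p.2
      (by simpa using happ p (1, 0))
    have hb := hasDerivAt_line_x (fun r => fderiv ℝ S r (0, 1)) _ p.1 p.2
      (by simpa using happ p (0, 1))
    have h2 := (((ha.pow 2).add (hb.pow 2)).div_const 4)
    show deriv (fun t => u (t, p.2)) p.1 = _
    rw [h1, HasDerivAt.deriv (f := fun t => ((fderiv ℝ S (t, p.2) (1, 0)) ^ 2 + (fderiv ℝ S (t, p.2) (0, 1)) ^ 2) / 4) h2]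
    simp [Prod.mk.eta]
  have huy : pdy u p = (2 * fderiv ℝ S p (1, 0) * D p (0, 1) (1, 0)
      + 2 * fderiv ℝ S p (0, 1) * D p (0, 1) (0, 1)) / 4 := by
    have h1 : (fun t => u (p.1, t)) =
        fun t => ((fderiv ℝ S (p.1, t) (1, 0)) ^ 2 + (fderiv ℝ S (p.1, t) (0, 1)) ^ 2) / 4 := by
      funext t; exact hueq (p.1, t)
    have ha := hasDerivAt_line_y (fun r => fderiv ℝ S r (1, 0)) _ p.1 p.2
      (by simpa using happ p (1, 0))
    have hb := hasDerivAt_line_y (fun r => fderiv ℝ S r (0, 1)) _ p.1 p.2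
      (by simpa using happ p (0, 1))
    have h2 := (((ha.pow 2).add (hb.pow 2)).div_const 4)
    show deriv (fun t => u (p.1, t)) p.2 = _
    rw [h1, HasDerivAt.deriv (f := fun t => ((fderiv ℝ S (p.1, t) (1, 0)) ^ 2 + (fderiv ℝ S (p.1, t) (0, 1)) ^ 2) / 4) h2]
    simp [Prod.mk.eta]
  -- log derivative
  have hlog : deriv (fun v => Real.log (I₀ v)) (u p) = deriv I₀ (u p) / I₀ (u p) := by
    have hd : HasDerivAt I₀ (deriv I₀ (u p)) (u p) :=
      ((hI₀.differentiable (by simp)) (u p)).hasDerivAt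
    exact (hd.log (ne_of_gt (hI₀pos _))).deriv
  -- put together
  have hc := hcons p
  rw [hxx, hyy, hux, huy, hpdxS p, hpdyS p] at hc
  rw [hlog, hxx, hyy, hxy, hpdxS p, hpdyS p]
  have hIne : I₀ (u p) ≠ 0 := ne_of_gt (hI₀pos _)
  have hsym : D p (0, 1) (1, 0) = D p (1, 0) (0, 1) := hsymm p _ _
  rw [hsym] at hc ⊢
  field_simp
  linear_combination 2 * hc
end

section
/- If S₁ and S₂ are two solutions of the Hamilton–Jacobi pair S_y = S_x² + u, S_t = S_x³ + (3/2)u S_x + (3/2)u_x + (3/4)v (with the same u, v satisfying v_x = u_y), then δu = (S₁ − S₂)_xx together with δv = (S₁ − S₂)_xy solves the linearized dKP system (δu)_t = (3/2)(u_x δu + u (δu)_x) + (3/4)(δv)_y, (δv)_x = (δu)_y; i.e., (S₁−S₂)_xx is an infinitesimal symmetry of the dKP equation u_t = (3/2)u u_x + (3/4)v_y, v_x = u_y. -/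
/-- Partial derivatives on ℝ³ with coordinates (x, y, t). -/
noncomputable def pdx3 (f : ℝ × ℝ × ℝ → ℝ) (p : ℝ × ℝ × ℝ) : ℝ :=
  deriv (fun s => f (s, p.2.1, p.2.2)) p.1
noncomputable def pdy3 (f : ℝ × ℝ × ℝ → ℝ) (p : ℝ × ℝ × ℝ) : ℝ :=
  deriv (fun s => f (p.1, s, p.2.2)) p.2.1
noncomputable def pdt3 (f : ℝ × ℝ × ℝ → ℝ) (p : ℝ × ℝ × ℝ) : ℝ :=
  deriv (fun s => f (p.1, p.2.1, s)) p.2.2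

open scoped ContDiff

namespace DKPaux

lemma one_le_inf : (∞ : WithTop ℕ∞) ≠ 0 := by simp
lemma two_le_inf : (2 : WithTop ℕ∞) ≤ ∞ := WithTop.coe_le_coe.mpr le_top
lemma inf_add_one_le : ∞ + 1 ≤ (∞ : WithTop ℕ∞) := by simp

variable {f g : ℝ × ℝ × ℝ → ℝ} {p : ℝ × ℝ × ℝ}

lemma hasDerivAt_cx (y t s : ℝ) :
    HasDerivAt (fun r : ℝ => ((r, y, t) : ℝ × ℝ × ℝ)) (1, 0, 0) s :=
  (hasDerivAt_id s).prodMk ((hasDerivAt_const s y).prodMk (hasDerivAt_const s t))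

lemma hasDerivAt_cy (x t s : ℝ) :
    HasDerivAt (fun r : ℝ => ((x, r, t) : ℝ × ℝ × ℝ)) (0, 1, 0) s :=
  (hasDerivAt_const s x).prodMk ((hasDerivAt_id s).prodMk (hasDerivAt_const s t))

lemma hasDerivAt_ct (x y s : ℝ) :
    HasDerivAt (fun r : ℝ => ((x, y, r) : ℝ × ℝ × ℝ)) (0, 0, 1) s :=
  (hasDerivAt_const s x).prodMk ((hasDerivAt_const s y).prodMk (hasDerivAt_id s))

lemma contDiff_secx (hf : ContDiff ℝ ∞ f) (y t : ℝ) :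
    ContDiff ℝ ∞ (fun s : ℝ => f (s, y, t)) :=
  hf.comp (contDiff_id.prodMk contDiff_const)

lemma contDiff_secy (hf : ContDiff ℝ ∞ f) (x t : ℝ) :
    ContDiff ℝ ∞ (fun s : ℝ => f (x, s, t)) :=
  hf.comp (contDiff_const.prodMk (contDiff_id.prodMk contDiff_const))

lemma contDiff_sect (hf : ContDiff ℝ ∞ f) (x y : ℝ) :
    ContDiff ℝ ∞ (fun s : ℝ => f (x, y, s)) :=
  hf.comp (contDiff_const.prodMk (contDiff_const.prodMk contDiff_id))

lemma pdx3_eq (hf : Differentiable ℝ f) (p : ℝ × ℝ × ℝ) :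
    pdx3 f p = fderiv ℝ f p (1, 0, 0) :=
  ((hf p).hasFDerivAt.comp_hasDerivAt p.1 (hasDerivAt_cx p.2.1 p.2.2 p.1)).deriv

lemma pdy3_eq (hf : Differentiable ℝ f) (p : ℝ × ℝ × ℝ) :
    pdy3 f p = fderiv ℝ f p (0, 1, 0) :=
  ((hf p).hasFDerivAt.comp_hasDerivAt p.2.1 (hasDerivAt_cy p.1 p.2.2 p.2.1)).deriv

lemma pdt3_eq (hf : Differentiable ℝ f) (p : ℝ × ℝ × ℝ) :
    pdt3 f p = fderiv ℝ f p (0, 0, 1) :=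
  ((hf p).hasFDerivAt.comp_hasDerivAt p.2.2 (hasDerivAt_ct p.1 p.2.1 p.2.2)).deriv

lemma contDiff_fderiv_apply (hf : ContDiff ℝ ∞ f) (w : ℝ × ℝ × ℝ) :
    ContDiff ℝ ∞ (fun q => fderiv ℝ f q w) :=
  (hf.fderiv_right inf_add_one_le).clm_apply contDiff_const

lemma contDiff_pdx3 (hf : ContDiff ℝ ∞ f) : ContDiff ℝ ∞ (pdx3 f) := by
  have h : pdx3 f = fun q => fderiv ℝ f q (1, 0, 0) :=
    funext (pdx3_eq (hf.differentiable one_le_inf))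
  rw [h]; exact contDiff_fderiv_apply hf _

lemma contDiff_pdy3 (hf : ContDiff ℝ ∞ f) : ContDiff ℝ ∞ (pdy3 f) := by
  have h : pdy3 f = fun q => fderiv ℝ f q (0, 1, 0) :=
    funext (pdy3_eq (hf.differentiable one_le_inf))
  rw [h]; exact contDiff_fderiv_apply hf _

lemma contDiff_pdt3 (hf : ContDiff ℝ ∞ f) : ContDiff ℝ ∞ (pdt3 f) := by
  have h : pdt3 f = fun q => fderiv ℝ f q (0, 0, 1) :=
    funext (pdt3_eq (hf.differentiable one_le_inf))
  rw [h]; exact contDiff_fderiv_apply hf _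

lemma fderiv_fderiv_apply (hf : ContDiff ℝ ∞ f) (p v w : ℝ × ℝ × ℝ) :
    fderiv ℝ (fun q => fderiv ℝ f q v) p w = fderiv ℝ (fderiv ℝ f) p w v := by
  have h : fderiv ℝ (fun q => fderiv ℝ f q v) p
      = (ContinuousLinearMap.apply ℝ ℝ v).comp (fderiv ℝ (fderiv ℝ f) p) :=
    ((ContinuousLinearMap.apply ℝ ℝ v).hasFDerivAt.comp p
      (((hf.fderiv_right inf_add_one_le).differentiable one_le_inf) p).hasFDerivAt).fderiv
  rw [h]; rfl

lemma fderiv_swap (hf : ContDiff ℝ ∞ f) (p v w : ℝ × ℝ × ℝ) :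
    fderiv ℝ (fun q => fderiv ℝ f q v) p w = fderiv ℝ (fun q => fderiv ℝ f q w) p v := by
  rw [fderiv_fderiv_apply hf, fderiv_fderiv_apply hf]
  exact (hf.contDiffAt.isSymmSndFDerivAt (by rw [minSmoothness_of_isRCLikeNormedField]; exact two_le_inf)) w v

end DKPaux

namespace DKPaux
variable {f g : ℝ × ℝ × ℝ → ℝ} {p : ℝ × ℝ × ℝ}

lemma comm_xy (hf : ContDiff ℝ ∞ f) (p : ℝ × ℝ × ℝ) :
    pdx3 (pdy3 f) p = pdy3 (pdx3 f) p := by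
  have hd := hf.differentiable one_le_inf
  have h1 : pdy3 f = fun q => fderiv ℝ f q (0, 1, 0) := funext (pdy3_eq hd)
  have h2 : pdx3 f = fun q => fderiv ℝ f q (1, 0, 0) := funext (pdx3_eq hd)
  rw [h1, h2,
    pdx3_eq ((contDiff_fderiv_apply hf _).differentiable one_le_inf),
    pdy3_eq ((contDiff_fderiv_apply hf _).differentiable one_le_inf)]
  exact fderiv_swap hf p _ _

lemma comm_xt (hf : ContDiff ℝ ∞ f) (p : ℝ × ℝ × ℝ) :
    pdx3 (pdt3 f) p = pdt3 (pdx3 f) p := by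
  have hd := hf.differentiable one_le_inf
  have h1 : pdt3 f = fun q => fderiv ℝ f q (0, 0, 1) := funext (pdt3_eq hd)
  have h2 : pdx3 f = fun q => fderiv ℝ f q (1, 0, 0) := funext (pdx3_eq hd)
  rw [h1, h2,
    pdx3_eq ((contDiff_fderiv_apply hf _).differentiable one_le_inf),
    pdt3_eq ((contDiff_fderiv_apply hf _).differentiable one_le_inf)]
  exact fderiv_swap hf p _ _

lemma pdt3_sub (hf : ContDiff ℝ ∞ f) (hg : ContDiff ℝ ∞ g) (p : ℝ × ℝ × ℝ) :
    pdt3 (fun q => f q - g q) p = pdt3 f p - pdt3 g p :=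
  deriv_fun_sub (((contDiff_sect hf p.1 p.2.1).differentiable one_le_inf) p.2.2)
    (((contDiff_sect hg p.1 p.2.1).differentiable one_le_inf) p.2.2)

lemma pdy3_sub (hf : ContDiff ℝ ∞ f) (hg : ContDiff ℝ ∞ g) (p : ℝ × ℝ × ℝ) :
    pdy3 (fun q => f q - g q) p = pdy3 f p - pdy3 g p :=
  deriv_fun_sub (((contDiff_secy hf p.1 p.2.2).differentiable one_le_inf) p.2.1)
    (((contDiff_secy hg p.1 p.2.2).differentiable one_le_inf) p.2.1)

lemma pdy3_sq (hf : ContDiff ℝ ∞ f) (p : ℝ × ℝ × ℝ) :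
    pdy3 (fun q => f q ^ 2) p = 2 * f p * pdy3 f p := by
  have h := ((((contDiff_secy hf p.1 p.2.2).differentiable one_le_inf) p.2.1).hasDerivAt.fun_pow 2).deriv
  rw [show pdy3 (fun q => f q ^ 2) p
      = deriv (fun s => f (p.1, s, p.2.2) ^ 2) p.2.1 from rfl, h]
  show (2 : ℕ) * f (p.1, p.2.1, p.2.2) ^ (2 - 1) * pdy3 f p = _
  norm_num

end DKPaux

namespace DKPaux

lemma oneD (f g c : ℝ → ℝ) (hf : ContDiff ℝ ∞ f) (hg : ContDiff ℝ ∞ g)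
    (hc : ContDiff ℝ ∞ c) (x : ℝ) :
    deriv (deriv (fun s => (deriv f s) ^ 3 - (deriv g s) ^ 3
        + 3 / 2 * c s * (deriv f s - deriv g s))) x
    = 3 / 2 * (deriv c x * deriv (deriv (fun s => f s - g s)) x
        + c x * deriv (deriv (deriv (fun s => f s - g s))) x)
    + 3 / 4 * deriv (fun s => 2 * deriv f s * deriv (fun r => (deriv f r) ^ 2 + c r) s
        - 2 * deriv g s * deriv (fun r => (deriv g r) ^ 2 + c r) s) x := by
  have ha : ContDiff ℝ ∞ (deriv f) := (contDiff_infty_iff_deriv.mp hf).2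
  have hb : ContDiff ℝ ∞ (deriv g) := (contDiff_infty_iff_deriv.mp hg).2
  have ha2 : ContDiff ℝ ∞ (deriv (deriv f)) := (contDiff_infty_iff_deriv.mp ha).2
  have hb2 : ContDiff ℝ ∞ (deriv (deriv g)) := (contDiff_infty_iff_deriv.mp hb).2
  have hc1 : ContDiff ℝ ∞ (deriv c) := (contDiff_infty_iff_deriv.mp hc).2
  have df : Differentiable ℝ f := hf.differentiable one_le_inf
  have dg : Differentiable ℝ g := hg.differentiable one_le_inf
  have da : Differentiable ℝ (deriv f) := ha.differentiable one_le_inf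
  have db : Differentiable ℝ (deriv g) := hb.differentiable one_le_inf
  have da2 : Differentiable ℝ (deriv (deriv f)) := ha2.differentiable one_le_inf
  have db2 : Differentiable ℝ (deriv (deriv g)) := hb2.differentiable one_le_inf
  have dc : Differentiable ℝ c := hc.differentiable one_le_inf
  have dc1 : Differentiable ℝ (deriv c) := hc1.differentiable one_le_inf
  -- derivatives of f - g
  have hsub : deriv (fun s => f s - g s) = fun s => deriv f s - deriv g s :=
    funext fun s => deriv_fun_sub (df s) (dg s)
  have hsub2 : deriv (fun s => deriv f s - deriv g s)
      = fun s => deriv (deriv f) s - deriv (deriv g) s :=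
    funext fun s => deriv_fun_sub (da s) (db s)
  have r2 : deriv (deriv (deriv (fun s => f s - g s))) x
      = deriv (deriv (deriv f)) x - deriv (deriv (deriv g)) x := by
    rw [hsub, hsub2]; exact deriv_fun_sub (da2 x) (db2 x)
  have r1 : deriv (deriv (fun s => f s - g s)) x
      = deriv (deriv f) x - deriv (deriv g) x := by
    rw [hsub]; exact deriv_fun_sub (da x) (db x)
  -- inner auxiliary derivative
  have hPf : deriv (fun r => (deriv f r) ^ 2 + c r)
      = fun s => 2 * deriv f s * deriv (deriv f) s + deriv c s := by
    funext s
    have H : HasDerivAt (fun r => (deriv f r) ^ 2 + c r)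
        (2 * deriv f s * deriv (deriv f) s + deriv c s) s :=
      (((da s).hasDerivAt.fun_pow 2).add (dc s).hasDerivAt).congr_deriv (by push_cast; ring)
    exact H.deriv
  have hPg : deriv (fun r => (deriv g r) ^ 2 + c r)
      = fun s => 2 * deriv g s * deriv (deriv g) s + deriv c s := by
    funext s
    have H : HasDerivAt (fun r => (deriv g r) ^ 2 + c r)
        (2 * deriv g s * deriv (deriv g) s + deriv c s) s :=
      (((db s).hasDerivAt.fun_pow 2).add (dc s).hasDerivAt).congr_deriv (by push_cast; ring)
    exact H.deriv
  -- the K-term derivative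
  have hK : deriv (fun s => 2 * deriv f s * deriv (fun r => (deriv f r) ^ 2 + c r) s
        - 2 * deriv g s * deriv (fun r => (deriv g r) ^ 2 + c r) s) x
      = 2 * deriv (deriv f) x * (2 * deriv f x * deriv (deriv f) x + deriv c x)
        + 2 * deriv f x * (2 * deriv (deriv f) x * deriv (deriv f) x
            + 2 * deriv f x * deriv (deriv (deriv f)) x + deriv (deriv c) x)
        - (2 * deriv (deriv g) x * (2 * deriv g x * deriv (deriv g) x + deriv c x)
          + 2 * deriv g x * (2 * deriv (deriv g) x * deriv (deriv g) x
              + 2 * deriv g x * deriv (deriv (deriv g)) x + deriv (deriv c) x)) := by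
    rw [hPf, hPg]
    have H : HasDerivAt (fun s => 2 * deriv f s * (2 * deriv f s * deriv (deriv f) s + deriv c s)
        - 2 * deriv g s * (2 * deriv g s * deriv (deriv g) s + deriv c s))
        (2 * deriv (deriv f) x * (2 * deriv f x * deriv (deriv f) x + deriv c x)
          + 2 * deriv f x * (2 * deriv (deriv f) x * deriv (deriv f) x
              + 2 * deriv f x * deriv (deriv (deriv f)) x + deriv (deriv c) x)
          - (2 * deriv (deriv g) x * (2 * deriv g x * deriv (deriv g) x + deriv c x)
            + 2 * deriv g x * (2 * deriv (deriv g) x * deriv (deriv g) x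
                + 2 * deriv g x * deriv (deriv (deriv g)) x + deriv (deriv c) x))) x := by
      refine HasDerivAt.congr_deriv (HasDerivAt.sub
        (((da x).hasDerivAt.const_mul 2).mul
          ((((da x).hasDerivAt.const_mul 2).mul (da2 x).hasDerivAt).add (dc1 x).hasDerivAt))
        (((db x).hasDerivAt.const_mul 2).mul
          ((((db x).hasDerivAt.const_mul 2).mul (db2 x).hasDerivAt).add (dc1 x).hasDerivAt)))
        (by push_cast; ring)
    exact H.deriv
  -- main term: first derivative
  have hT : deriv (fun s => (deriv f s) ^ 3 - (deriv g s) ^ 3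
        + 3 / 2 * c s * (deriv f s - deriv g s))
      = fun s => 3 * deriv f s ^ 2 * deriv (deriv f) s - 3 * deriv g s ^ 2 * deriv (deriv g) s
          + (3 / 2 * deriv c s * (deriv f s - deriv g s)
            + 3 / 2 * c s * (deriv (deriv f) s - deriv (deriv g) s)) := by
    funext s
    have H : HasDerivAt (fun s => (deriv f s) ^ 3 - (deriv g s) ^ 3
        + 3 / 2 * c s * (deriv f s - deriv g s))
        (3 * deriv f s ^ 2 * deriv (deriv f) s - 3 * deriv g s ^ 2 * deriv (deriv g) s
          + (3 / 2 * deriv c s * (deriv f s - deriv g s)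
            + 3 / 2 * c s * (deriv (deriv f) s - deriv (deriv g) s))) s :=
      ((((da s).hasDerivAt.fun_pow 3).sub ((db s).hasDerivAt.fun_pow 3)).add
        (((dc s).hasDerivAt.const_mul (3 / 2 : ℝ)).mul
          ((da s).hasDerivAt.fun_sub (db s).hasDerivAt))).congr_deriv (by push_cast; ring)
    exact H.deriv
  -- main term: second derivative
  rw [hT, r1, r2, hK]
  have H2 : HasDerivAt (fun s => 3 * deriv f s ^ 2 * deriv (deriv f) s
        - 3 * deriv g s ^ 2 * deriv (deriv g) s
        + (3 / 2 * deriv c s * (deriv f s - deriv g s)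
          + 3 / 2 * c s * (deriv (deriv f) s - deriv (deriv g) s)))
      ((3 * (2 * deriv f x * deriv (deriv f) x) * deriv (deriv f) x
          + 3 * deriv f x ^ 2 * deriv (deriv (deriv f)) x)
        - (3 * (2 * deriv g x * deriv (deriv g) x) * deriv (deriv g) x
          + 3 * deriv g x ^ 2 * deriv (deriv (deriv g)) x)
        + ((3 / 2 * deriv (deriv c) x * (deriv f x - deriv g x)
            + 3 / 2 * deriv c x * (deriv (deriv f) x - deriv (deriv g) x))
          + (3 / 2 * deriv c x * (deriv (deriv f) x - deriv (deriv g) x)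
            + 3 / 2 * c x * (deriv (deriv (deriv f)) x - deriv (deriv (deriv g)) x)))) x := by
    refine HasDerivAt.congr_deriv (HasDerivAt.add (HasDerivAt.sub
      ((((da x).hasDerivAt.fun_pow 2).const_mul (3 : ℝ)).mul (da2 x).hasDerivAt)
      ((((db x).hasDerivAt.fun_pow 2).const_mul (3 : ℝ)).mul (db2 x).hasDerivAt))
      (HasDerivAt.add
        (((dc1 x).hasDerivAt.const_mul (3 / 2 : ℝ)).mul
          ((da x).hasDerivAt.sub (db x).hasDerivAt))
        (((dc x).hasDerivAt.const_mul (3 / 2 : ℝ)).mul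
          ((da2 x).hasDerivAt.sub (db2 x).hasDerivAt))))
      (by push_cast; ring)
  rw [H2.deriv]
  ring


end DKPaux

/-- If S₁ and S₂ solve the dKP Hamilton–Jacobi pair
S_y = S_x² + u, S_t = S_x³ + (3/2)u S_x + (3/2)u_x + (3/4)v (with v_x = u_y and u, v
solving dKP), then δu = (S₁ − S₂)_xx, δv = (S₁ − S₂)_xy solve the linearized dKP
system (δu)_t = (3/2)(u_x δu + u (δu)_x) + (3/4)(δv)_y, (δv)_x = (δu)_y. -/
theorem dKP_symmetry_from_HJ_solutions
    (u v S₁ S₂ : ℝ × ℝ × ℝ → ℝ)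
    (hu : ContDiff ℝ (⊤ : ℕ∞) u) (hv : ContDiff ℝ (⊤ : ℕ∞) v)
    (hS₁ : ContDiff ℝ (⊤ : ℕ∞) S₁) (hS₂ : ContDiff ℝ (⊤ : ℕ∞) S₂)
    (hvx : ∀ p, pdx3 v p = pdy3 u p)
    (hdKP : ∀ p, pdt3 u p = (3 / 2) * u p * pdx3 u p + (3 / 4) * pdy3 v p)
    (hHJ₁y : ∀ p, pdy3 S₁ p = (pdx3 S₁ p) ^ 2 + u p)
    (hHJ₁t : ∀ p, pdt3 S₁ p = (pdx3 S₁ p) ^ 3 + (3 / 2) * u p * pdx3 S₁ p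
      + (3 / 2) * pdx3 u p + (3 / 4) * v p)
    (hHJ₂y : ∀ p, pdy3 S₂ p = (pdx3 S₂ p) ^ 2 + u p)
    (hHJ₂t : ∀ p, pdt3 S₂ p = (pdx3 S₂ p) ^ 3 + (3 / 2) * u p * pdx3 S₂ p
      + (3 / 2) * pdx3 u p + (3 / 4) * v p)
    (δu δv : ℝ × ℝ × ℝ → ℝ)
    (hδu : δu = pdx3 (pdx3 (fun q => S₁ q - S₂ q)))
    (hδv : δv = pdy3 (pdx3 (fun q => S₁ q - S₂ q))) :
    ∀ p, pdt3 δu p = (3 / 2) * (pdx3 u p * δu p + u p * pdx3 δu p)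
        + (3 / 4) * pdy3 δv p
      ∧ pdx3 δv p = pdy3 δu p := by
  have hu' : ContDiff ℝ ∞ u := hu.of_le (by simp)
  have hS₁' : ContDiff ℝ ∞ S₁ := hS₁.of_le (by simp)
  have hS₂' : ContDiff ℝ ∞ S₂ := hS₂.of_le (by simp)
  have hW : ContDiff ℝ ∞ (fun q => S₁ q - S₂ q) := hS₁'.sub hS₂'
  have hA : ContDiff ℝ ∞ (pdx3 S₁) := DKPaux.contDiff_pdx3 hS₁'
  have hB : ContDiff ℝ ∞ (pdx3 S₂) := DKPaux.contDiff_pdx3 hS₂'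
  have hG : ContDiff ℝ ∞ (fun q => pdx3 S₁ q ^ 2 - pdx3 S₂ q ^ 2) := (hA.pow 2).sub (hB.pow 2)
  have hpxW : ContDiff ℝ ∞ (pdx3 (fun q => S₁ q - S₂ q)) := DKPaux.contDiff_pdx3 hW
  intro p
  constructor
  · rw [hδu, hδv]
    have hE : pdt3 (pdx3 (fun q => S₁ q - S₂ q))
        = pdx3 (fun q => (pdx3 S₁ q) ^ 3 - (pdx3 S₂ q) ^ 3
            + 3 / 2 * u q * (pdx3 S₁ q - pdx3 S₂ q)) := by
      have h1 : pdt3 (pdx3 (fun q => S₁ q - S₂ q)) = pdx3 (pdt3 (fun q => S₁ q - S₂ q)) :=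
        funext fun q => (DKPaux.comm_xt hW q).symm
      have h2 : pdt3 (fun q => S₁ q - S₂ q)
          = fun q => (pdx3 S₁ q) ^ 3 - (pdx3 S₂ q) ^ 3
              + 3 / 2 * u q * (pdx3 S₁ q - pdx3 S₂ q) := by
        funext q
        rw [DKPaux.pdt3_sub hS₁' hS₂' q, hHJ₁t q, hHJ₂t q]
        ring
      rw [h1, h2]
    have hK : pdy3 (pdx3 (fun q => S₁ q - S₂ q))
        = pdx3 (fun q => pdx3 S₁ q ^ 2 - pdx3 S₂ q ^ 2) := by
      have h1 : pdy3 (pdx3 (fun q => S₁ q - S₂ q)) = pdx3 (pdy3 (fun q => S₁ q - S₂ q)) :=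
        funext fun q => (DKPaux.comm_xy hW q).symm
      have h2 : pdy3 (fun q => S₁ q - S₂ q)
          = fun q => pdx3 S₁ q ^ 2 - pdx3 S₂ q ^ 2 := by
        funext q
        rw [DKPaux.pdy3_sub hS₁' hS₂' q, hHJ₁y q, hHJ₂y q]
        ring
      rw [h1, h2]
    have hGy : pdy3 (fun q => pdx3 S₁ q ^ 2 - pdx3 S₂ q ^ 2)
        = fun q => 2 * pdx3 S₁ q * pdx3 (fun r => (pdx3 S₁ r) ^ 2 + u r) q
            - 2 * pdx3 S₂ q * pdx3 (fun r => (pdx3 S₂ r) ^ 2 + u r) q := by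
      have hy1 : pdy3 S₁ = fun r => (pdx3 S₁ r) ^ 2 + u r := funext hHJ₁y
      have hy2 : pdy3 S₂ = fun r => (pdx3 S₂ r) ^ 2 + u r := funext hHJ₂y
      funext q
      rw [DKPaux.pdy3_sub (hA.pow 2) (hB.pow 2) q, DKPaux.pdy3_sq hA q, DKPaux.pdy3_sq hB q]
      have e1 : pdy3 (pdx3 S₁) q = pdx3 (fun r => (pdx3 S₁ r) ^ 2 + u r) q := by
        rw [← DKPaux.comm_xy hS₁' q, hy1]
      have e2 : pdy3 (pdx3 S₂) q = pdx3 (fun r => (pdx3 S₂ r) ^ 2 + u r) q := by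
        rw [← DKPaux.comm_xy hS₂' q, hy2]
      rw [e1, e2]
    rw [show pdt3 (pdx3 (pdx3 (fun q => S₁ q - S₂ q))) p
        = pdx3 (pdt3 (pdx3 (fun q => S₁ q - S₂ q))) p from (DKPaux.comm_xt hpxW p).symm,
      hE]
    rw [hK]
    rw [show pdy3 (pdx3 (fun q => pdx3 S₁ q ^ 2 - pdx3 S₂ q ^ 2)) p
        = pdx3 (pdy3 (fun q => pdx3 S₁ q ^ 2 - pdx3 S₂ q ^ 2)) p
        from (DKPaux.comm_xy hG p).symm,
      hGy]
    exact DKPaux.oneD (fun s => S₁ (s, p.2.1, p.2.2)) (fun s => S₂ (s, p.2.1, p.2.2))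
      (fun s => u (s, p.2.1, p.2.2)) (DKPaux.contDiff_secx hS₁' _ _)
      (DKPaux.contDiff_secx hS₂' _ _) (DKPaux.contDiff_secx hu' _ _) p.1
  · rw [hδu, hδv]
    exact DKPaux.comm_xy hpxW p
end

section
/- Let S solve the complex eikonal equation S_z S_z̄ = u and the cubic flow S_τ = α S_z³ + ᾱ S_z̄³ + β S_z² + β̄ S_z̄² + γ S_z + γ̄ S_z̄ + δ + δ̄. Then the cross-derivative compatibility ∂_τ(S_z S_z̄) = u_τ forces (assuming genericity in S_z, S_z̄): α depends on z only, β = 0, γ_z̄ = −α_z u − 3α u_z, δ constant, and u_τ = (γu)_z + (γ̄ u)_z̄. Conversely, given these conditions the compatibility identity S_z̄ φ_z + S_z φ_z̄ + u_z φ' + u_z̄ φ'' = u_τ holds for φ = α S_z³ + ᾱ S_z̄³ + γ S_z + γ̄ S_z̄ + δ + δ̄. -/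
open ComplexConjugate

/-- Wirtinger derivative ∂/∂z = (∂_x − i ∂_y)/2 of f : ℂ → ℂ at z. -/
noncomputable def wirtZ (f : ℂ → ℂ) (z : ℂ) : ℂ :=
  (deriv (fun t : ℝ => f (z + t)) 0 - Complex.I * deriv (fun t : ℝ => f (z + t * Complex.I)) 0) / 2

/-- Wirtinger derivative ∂/∂z̄ = (∂_x + i ∂_y)/2 of f : ℂ → ℂ at z. -/
noncomputable def wirtZbar (f : ℂ → ℂ) (z : ℂ) : ℂ :=
  (deriv (fun t : ℝ => f (z + t)) 0 + Complex.I * deriv (fun t : ℝ => f (z + t * Complex.I)) 0) / 2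

@[fun_prop] lemma diff_ofReal' : Differentiable ℝ (fun t : ℝ => (t : ℂ)) :=
  Complex.ofRealCLM.differentiable

lemma deriv_slice_conj (f : ℝ → ℂ) (x : ℝ) :
    deriv (fun t : ℝ => conj (f t)) x = conj (deriv f x) := by
  simpa only [Complex.star_def] using deriv.star (𝕜 := ℝ) (f := f) (x := x)

lemma wirtZ_conj (f : ℂ → ℂ) (z : ℂ) :
    wirtZ (fun w => conj (f w)) z = conj (wirtZbar f z) := by
  simp only [wirtZ, wirtZbar, deriv_slice_conj, map_div₀, map_add, map_mul,
    Complex.conj_I, map_ofNat]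
  ring

lemma wirtZbar_conj (f : ℂ → ℂ) (z : ℂ) :
    wirtZbar (fun w => conj (f w)) z = conj (wirtZ f z) := by
  simp only [wirtZ, wirtZbar, deriv_slice_conj, map_div₀, map_sub, map_mul,
    Complex.conj_I, map_ofNat]
  ring

lemma wirtZbar_real (u : ℂ → ℝ) (z : ℂ) :
    wirtZbar (fun w => (u w : ℂ)) z = conj (wirtZ (fun w => (u w : ℂ)) z) := by
  have h1 : deriv (fun t : ℝ => (u (z + t) : ℂ)) 0
      = conj (deriv (fun t : ℝ => (u (z + t) : ℂ)) 0) := by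
    rw [← deriv_slice_conj]; simp [Complex.conj_ofReal]
  have h2 : deriv (fun t : ℝ => (u (z + t * Complex.I) : ℂ)) 0
      = conj (deriv (fun t : ℝ => (u (z + t * Complex.I) : ℂ)) 0) := by
    rw [← deriv_slice_conj]; simp [Complex.conj_ofReal]
  simp only [wirtZ, wirtZbar, map_div₀, map_sub, map_mul, Complex.conj_I, map_ofNat]
  rw [← h1, ← h2]; ring

lemma wirtZ_mul (f g : ℂ → ℂ) (z : ℂ) (hf : Differentiable ℝ f) (hg : Differentiable ℝ g) :
    wirtZ (fun w => f w * g w) z = wirtZ f z * g z + f z * wirtZ g z := by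
  have e0 : z + ((0:ℝ) : ℂ) = z := by simp
  have e1 : z + ((0:ℝ) : ℂ) * Complex.I = z := by simp
  have hd1 : DifferentiableAt ℝ (fun t : ℝ => f (z + t)) 0 := by fun_prop
  have hd2 : DifferentiableAt ℝ (fun t : ℝ => g (z + t)) 0 := by fun_prop
  have hd3 : DifferentiableAt ℝ (fun t : ℝ => f (z + t * Complex.I)) 0 := by fun_prop
  have hd4 : DifferentiableAt ℝ (fun t : ℝ => g (z + t * Complex.I)) 0 := by fun_prop
  simp only [wirtZ, deriv_fun_mul hd1 hd2, deriv_fun_mul hd3 hd4, e0, e1]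
  ring

lemma wirtZbar_mul (f g : ℂ → ℂ) (z : ℂ) (hf : Differentiable ℝ f) (hg : Differentiable ℝ g) :
    wirtZbar (fun w => f w * g w) z = wirtZbar f z * g z + f z * wirtZbar g z := by
  have e0 : z + ((0:ℝ) : ℂ) = z := by simp
  have e1 : z + ((0:ℝ) : ℂ) * Complex.I = z := by simp
  have hd1 : DifferentiableAt ℝ (fun t : ℝ => f (z + t)) 0 := by fun_prop
  have hd2 : DifferentiableAt ℝ (fun t : ℝ => g (z + t)) 0 := by fun_prop
  have hd3 : DifferentiableAt ℝ (fun t : ℝ => f (z + t * Complex.I)) 0 := by fun_prop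
  have hd4 : DifferentiableAt ℝ (fun t : ℝ => g (z + t * Complex.I)) 0 := by fun_prop
  simp only [wirtZbar, deriv_fun_mul hd1 hd2, deriv_fun_mul hd3 hd4, e0, e1]
  ring

lemma deriv_comb4 (f1 f2 f3 f4 : ℝ → ℂ) (c1 c2 c3 c4 c c' : ℂ) (x : ℝ)
    (h1 : DifferentiableAt ℝ f1 x) (h2 : DifferentiableAt ℝ f2 x)
    (h3 : DifferentiableAt ℝ f3 x) (h4 : DifferentiableAt ℝ f4 x) :
    deriv (fun t => f1 t * c1 + f2 t * c2 + f3 t * c3 + f4 t * c4 + c + c') x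
      = deriv f1 x * c1 + deriv f2 x * c2 + deriv f3 x * c3 + deriv f4 x * c4 := by
  have := (((((h1.hasDerivAt.mul_const c1).add (h2.hasDerivAt.mul_const c2)).add
    (h3.hasDerivAt.mul_const c3)).add (h4.hasDerivAt.mul_const c4)).add_const c).add_const c'
  exact this.deriv

lemma wirtZ_comb4 (f1 f2 f3 f4 : ℂ → ℂ) (c1 c2 c3 c4 c c' : ℂ) (z : ℂ)
    (h1 : Differentiable ℝ f1) (h2 : Differentiable ℝ f2)
    (h3 : Differentiable ℝ f3) (h4 : Differentiable ℝ f4) :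
    wirtZ (fun w => f1 w * c1 + f2 w * c2 + f3 w * c3 + f4 w * c4 + c + c') z
      = wirtZ f1 z * c1 + wirtZ f2 z * c2 + wirtZ f3 z * c3 + wirtZ f4 z * c4 := by
  simp only [wirtZ]
  rw [deriv_comb4 _ _ _ _ _ _ _ _ _ _ _ (by fun_prop) (by fun_prop) (by fun_prop) (by fun_prop),
    deriv_comb4 _ _ _ _ _ _ _ _ _ _ _ (by fun_prop) (by fun_prop) (by fun_prop) (by fun_prop)]
  ring

lemma wirtZbar_comb4 (f1 f2 f3 f4 : ℂ → ℂ) (c1 c2 c3 c4 c c' : ℂ) (z : ℂ)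
    (h1 : Differentiable ℝ f1) (h2 : Differentiable ℝ f2)
    (h3 : Differentiable ℝ f3) (h4 : Differentiable ℝ f4) :
    wirtZbar (fun w => f1 w * c1 + f2 w * c2 + f3 w * c3 + f4 w * c4 + c + c') z
      = wirtZbar f1 z * c1 + wirtZbar f2 z * c2 + wirtZbar f3 z * c3 + wirtZbar f4 z * c4 := by
  simp only [wirtZbar]
  rw [deriv_comb4 _ _ _ _ _ _ _ _ _ _ _ (by fun_prop) (by fun_prop) (by fun_prop) (by fun_prop),
    deriv_comb4 _ _ _ _ _ _ _ _ _ _ _ (by fun_prop) (by fun_prop) (by fun_prop) (by fun_prop)]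
  ring

/-- Converse direction of the cubic-flow compatibility: if α = α(z) (i.e. α_z̄ = 0),
β = 0, γ_z̄ = −α_z u − 3α u_z, δ constant, and u_τ = (γu)_z + (γ̄u)_z̄, then the
compatibility identity S_z̄ φ_z + S_z φ_z̄ + u_z φ' + u_z̄ φ'' = u_τ holds for
φ = α S_z³ + ᾱ S_z̄³ + γ S_z + γ̄ S_z̄ + δ + δ̄, where p = S_z, q = S_z̄, pq = u. -/
theorem cubic_flow_compatibility
    (α : ℂ → ℂ) (γ : ℝ → ℂ → ℂ) (δ : ℂ) (u : ℝ → ℂ → ℝ)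
    (hα : ContDiff ℝ (⊤ : ℕ∞) α)
    (hγ : ContDiff ℝ (⊤ : ℕ∞) fun r : ℝ × ℂ => γ r.1 r.2)
    (hu : ContDiff ℝ (⊤ : ℕ∞) fun r : ℝ × ℂ => u r.1 r.2)
    (hαz : ∀ z : ℂ, wirtZbar α z = 0)
    (hγzbar : ∀ (τ : ℝ) (z : ℂ), wirtZbar (γ τ) z
      = -(wirtZ α z) * (u τ z : ℂ) - 3 * α z * wirtZ (fun w => (u τ w : ℂ)) z)
    (huτ : ∀ (τ : ℝ) (z : ℂ), deriv (fun t => (u t z : ℂ)) τ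
      = wirtZ (fun w => γ τ w * (u τ w : ℂ)) z
        + wirtZbar (fun w => conj (γ τ w) * (u τ w : ℂ)) z) :
    ∀ (τ : ℝ) (z : ℂ) (p q : ℂ), p * q = (u τ z : ℂ) →
      q * wirtZ (fun w => α w * p ^ 3 + conj (α w) * q ^ 3
          + γ τ w * p + conj (γ τ w) * q + δ + conj δ) z
      + p * wirtZbar (fun w => α w * p ^ 3 + conj (α w) * q ^ 3
          + γ τ w * p + conj (γ τ w) * q + δ + conj δ) z
      + wirtZ (fun w => (u τ w : ℂ)) z * (3 * α z * p ^ 2 + γ τ z)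
      + wirtZbar (fun w => (u τ w : ℂ)) z * (3 * conj (α z) * q ^ 2 + conj (γ τ z))
      = deriv (fun t => (u t z : ℂ)) τ := by
  intro τ z p q hpq
  have hαd : Differentiable ℝ α := hα.differentiable (by simp)
  have hγτ : Differentiable ℝ (γ τ) := by
    have : Differentiable ℝ (fun w : ℂ => γ τ w) :=
      (hγ.differentiable (by simp)).comp (f := fun w : ℂ => (τ, w)) (by fun_prop)
    exact this
  have huτd : Differentiable ℝ (fun w : ℂ => (u τ w : ℂ)) := by
    have : Differentiable ℝ (fun w : ℂ => u τ w) :=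
      (hu.differentiable (by simp)).comp (f := fun w : ℂ => (τ, w)) (by fun_prop)
    exact Complex.ofRealCLM.differentiable.comp this
  have hαc : Differentiable ℝ (fun w => conj (α w)) :=
    Complex.conjCLE.differentiable.comp hαd
  have hγc : Differentiable ℝ (fun w => conj (γ τ w)) :=
    Complex.conjCLE.differentiable.comp hγτ
  -- abbreviations
  set A := wirtZ α z with hA
  set G := wirtZ (γ τ) z with hG
  set Gb := wirtZbar (γ τ) z with hGb
  set uz := wirtZ (fun w => (u τ w : ℂ)) z with huz
  -- expand the wirtZ / wirtZbar of φ
  rw [wirtZ_comb4 _ _ _ _ _ _ _ _ _ _ _ hαd hαc hγτ hγc,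
      wirtZbar_comb4 _ _ _ _ _ _ _ _ _ _ _ hαd hαc hγτ hγc,
      wirtZ_conj, wirtZbar_conj, wirtZ_conj, wirtZbar_conj]
  rw [huτ τ z, wirtZ_mul _ _ _ hγτ huτd, wirtZbar_mul _ _ _ hγc huτd]
  rw [wirtZbar_conj, wirtZbar_real]
  rw [hαz, hγzbar τ z, ← huz, ← hA, ← hG]
  have hcu : conj ((u τ z : ℝ) : ℂ) = ((u τ z : ℝ) : ℂ) := Complex.conj_ofReal _
  rw [← hpq] at hcu ⊢
  simp only [map_sub, map_mul, map_neg, map_ofNat, hcu, map_zero]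
  ring
end
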